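/- Let u ∈ C(Ω) enjoy comparison with cones both from above and from below on an open set Ω ⊆ ℝⁿ. Then u is locally Lipschitz continuous in Ω: for every compact K ⊆ Ω there is C such that |u(x) - u(y)| ≤ C|x - y| for all x, y ∈ K sufficiently close. -/

import Mathlib

open Metric

/-- Comparison with cones from above in `Ω`. -/
def CompConesAbove {n : ℕ} (Ω : Set (EuclideanSpace ℝ (Fin n)))
    (u : EuclideanSpace ℝ (Fin n) → ℝ) : Prop :=
  ∀ V : Set (EuclideanSpace ℝ (Fin n)), IsOpen V → Bornology.IsBounded V → closure V ⊆ Ω →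
    ∀ z : EuclideanSpace ℝ (Fin n), ∀ a b : ℝ,
      (∀ y ∈ frontier (V \ {z}), u y ≤ a + b * ‖y - z‖) →
      ∀ y ∈ V, u y ≤ a + b * ‖y - z‖

/-- Comparison with cones from below in `Ω`. -/
def CompConesBelow {n : ℕ} (Ω : Set (EuclideanSpace ℝ (Fin n)))
    (u : EuclideanSpace ℝ (Fin n) → ℝ) : Prop :=
  ∀ V : Set (EuclideanSpace ℝ (Fin n)), IsOpen V → Bornology.IsBounded V → closure V ⊆ Ω →
    ∀ z : EuclideanSpace ℝ (Fin n), ∀ a b : ℝ,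
      (∀ y ∈ frontier (V \ {z}), u y ≥ a - b * ‖y - z‖) →
      ∀ y ∈ V, u y ≥ a - b * ‖y - z‖

/-!
If `|u| ≤ M` on `closedBall x r ⊆ Ω`, the cones `u x ± (2M/r) ‖· - x‖` with vertex `x` lie above
(resp. below) `u` on the frontier of `ball x r \ {x}`, which consists of `x` and the sphere.
Comparison with cones then gives `|u y - u x| ≤ (2M/r) ‖y - x‖` on the ball; covering a compact
`K` by balls of a uniform radius inside `Ω` makes `M` and `r` uniform.
-/

theorem frontier_ball_diff_singleton_subset {X : Type*} [MetricSpace X] (x : X) (r : ℝ) :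
    frontier (ball x r \ {x}) ⊆ insert x (sphere x r) := by
  rw [(isOpen_ball.sdiff isClosed_singleton).frontier_eq]
  rintro w ⟨hw_closure, hw_not_mem⟩
  by_cases hwx : w = x
  · exact Or.inl hwx
  · have hw_not_ball : w ∉ ball x r := fun hw => hw_not_mem ⟨hw, hwx⟩
    exact Or.inr <| le_antisymm
      (closure_ball_subset_closedBall (closure_mono Set.sdiff_subset hw_closure))
      (not_lt.1 hw_not_ball)

section CompCones

variable {n : ℕ} {Ω : Set (EuclideanSpace ℝ (Fin n))} {u : EuclideanSpace ℝ (Fin n) → ℝ}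
  {x : EuclideanSpace ℝ (Fin n)} {r L : ℝ}

theorem CompConesBelow.neg (h : CompConesBelow Ω u) : CompConesAbove Ω (-u) := by
  intro V hV hV_bdd hVΩ z a b hfrontier y hy
  have := h V hV hV_bdd hVΩ z (-a) b
    (fun w hw => by linarith [hfrontier w hw, Pi.neg_apply u w]) y hy
  simp only [Pi.neg_apply]
  linarith

theorem CompConesAbove.sub_le_of_sphere (h : CompConesAbove Ω u) (hΩ : closedBall x r ⊆ Ω)
    (hL : ∀ w ∈ sphere x r, u w - u x ≤ L * r) :
    ∀ y ∈ ball x r, u y - u x ≤ L * dist y x := by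
  have hcone : ∀ w ∈ frontier (ball x r \ {x}), u w ≤ u x + L * ‖w - x‖ := by
    intro w hw
    rcases frontier_ball_diff_singleton_subset x r hw with rfl | hw_sphere
    · simp
    · rw [← dist_eq_norm, mem_sphere.1 hw_sphere]
      linarith [hL w hw_sphere]
  intro y hy
  have := h (ball x r) isOpen_ball isBounded_ball (closure_ball_subset_closedBall.trans hΩ)
    x (u x) L hcone y hy
  rw [dist_eq_norm]
  linarith

theorem abs_sub_le_of_compConesAbove_of_compConesBelow (ha : CompConesAbove Ω u)
    (hb : CompConesBelow Ω u) (hΩ : closedBall x r ⊆ Ω)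
    (hL : ∀ w ∈ sphere x r, |u w - u x| ≤ L * r) :
    ∀ y ∈ ball x r, |u y - u x| ≤ L * dist y x := by
  intro y hy
  have hup := ha.sub_le_of_sphere hΩ (fun w hw => (abs_le.1 (hL w hw)).2) y hy
  have hdown := hb.neg.sub_le_of_sphere (L := L) hΩ (fun w hw => by
    simp only [Pi.neg_apply]
    linarith [(abs_le.1 (hL w hw)).1]) y hy
  simp only [Pi.neg_apply] at hdown
  exact abs_le.2 ⟨by linarith, hup⟩

end CompCones

/-- A continuous function enjoying comparison with cones from above and below is locally
Lipschitz in `Ω`. -/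
theorem stmt7 {n : ℕ} (Ω : Set (EuclideanSpace ℝ (Fin n))) (hΩ : IsOpen Ω)
    (u : EuclideanSpace ℝ (Fin n) → ℝ) (hu : ContinuousOn u Ω)
    (ha : CompConesAbove Ω u) (hb : CompConesBelow Ω u) :
    ∀ K : Set (EuclideanSpace ℝ (Fin n)), K ⊆ Ω → IsCompact K →
      ∃ C > (0:ℝ), ∃ δ > (0:ℝ), ∀ x ∈ K, ∀ y ∈ K, dist x y < δ →
        |u x - u y| ≤ C * dist x y := by
  intro K hKΩ hK
  obtain ⟨r, hr, hrΩ⟩ := hK.exists_cthickening_subset_open hΩ hKΩ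
  obtain ⟨M, hM⟩ := hK.cthickening.exists_bound_of_continuousOn (hu.mono hrΩ)
  refine ⟨max (2 * M / r) 1, lt_max_of_lt_right one_pos, r, hr, fun x hx y _ hxy => ?_⟩
  have hball : closedBall x r ⊆ cthickening r K := closedBall_subset_cthickening hx r
  have hosc : ∀ w ∈ sphere x r, |u w - u x| ≤ 2 * M / r * r := by
    intro w hw
    have hMw := hM w (hball (sphere_subset_closedBall hw))
    have hMx := hM x (hball (mem_closedBall_self hr.le))
    rw [Real.norm_eq_abs] at hMw hMx
    rw [div_mul_cancel₀ _ hr.ne']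
    linarith [abs_sub (u w) (u x)]
  calc |u x - u y| = |u y - u x| := abs_sub_comm _ _
    _ ≤ 2 * M / r * dist y x :=
      abs_sub_le_of_compConesAbove_of_compConesBelow ha hb (hball.trans hrΩ) hosc y
        (mem_ball.2 (by rwa [dist_comm]))
    _ ≤ max (2 * M / r) 1 * dist x y := by
      rw [dist_comm]
      exact mul_le_mul_of_nonneg_right (le_max_left _ _) dist_nonneg
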